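/- arXiv:math/0502027 — 2 statements merged into one kernel-verified Lean document; each statement's English description precedes it below -/
import Mathlib

section
/- The set of linear operators on P_n commuting with the differentiation operator D is a commutative subalgebra of L(P_n) of dimension n+1, and it is a maximal commutative subalgebra. -/
open Polynomial

/-- `P n` is the space of complex polynomials of degree at most `n`. -/
noncomputable def Pn (n : ℕ) : Submodule ℂ (Polynomial ℂ) := Polynomial.degreeLT ℂ (n + 1)

noncomputable instance instPnEndAddCommGroup (n : ℕ) : AddCommGroup (Module.End ℂ (Pn n)) :=
  LinearMap.addCommGroup

noncomputable instance instPnEndRing (n : ℕ) : Ring (Module.End ℂ (Pn n)) := Module.End.instRing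

/-- The differentiation operator on `Pn n`. -/
noncomputable def Dop (n : ℕ) : Module.End ℂ (Pn n) :=
  (Polynomial.derivative (R := ℂ)).restrict (p := Pn n) (q := Pn n)
    (fun f hf => by
      simp only [Pn, Polynomial.mem_degreeLT] at *
      exact lt_of_le_of_lt (Polynomial.degree_derivative_le) hf)

/-- The subalgebra of operators on `Pn n` commuting with `Dop n`
(the centralizer of `{Dop n}`). -/
noncomputable def Cent (n : ℕ) : Subalgebra ℂ (Module.End ℂ (Pn n)) :=
  Subalgebra.centralizer ℂ {Dop n}

/-!
`X ^ n` is a cyclic vector of `D`: the iterates `D^k (X ^ n)` are nonzero multiples of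
`X ^ (n - k)`, so every polynomial of degree at most `n` is `p(D) (X ^ n)` for some `p`.
An operator `T` commuting with `D` is determined by `T (X ^ n) = p(D) (X ^ n)`, hence `T = p(D)`.
So the centralizer of `D` is the commutative algebra `ℂ[D]`, and evaluation at `X ^ n` identifies
it with `P_n`, of dimension `n + 1`. Any commutative subalgebra containing it contains `D`, so it
commutes with `D` and lies in the centralizer.
-/

theorem Subalgebra.mem_centralizer_singleton_iff {R A : Type*} [CommSemiring R] [Semiring A]
    [Algebra R A] {a b : A} : b ∈ Subalgebra.centralizer R {a} ↔ Commute a b := by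
  simp [Subalgebra.mem_centralizer_iff, Commute, SemiconjBy]

theorem Subalgebra.eq_centralizer_singleton_of_mul_comm {R A : Type*} [CommSemiring R] [Semiring A]
    [Algebra R A] {a : A} {B : Subalgebra R A} (hB : ∀ S ∈ B, ∀ T ∈ B, S * T = T * S)
    (hle : Subalgebra.centralizer R {a} ≤ B) : B = Subalgebra.centralizer R {a} := by
  have ha : a ∈ B := hle (mem_centralizer_singleton_iff.mpr (Commute.refl a))
  exact le_antisymm (fun T hT => mem_centralizer_singleton_iff.mpr (hB a ha T hT)) hle

open Algebra Subalgebra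

namespace Module.End

variable {R M : Type*} [CommSemiring R] [AddCommMonoid M] [Module R M]

def IsCyclicVector (f : Module.End R M) (v : M) : Prop :=
  ∀ x : M, ∃ p : R[X], aeval f p v = x

theorem isCyclicVector_of_span_eq_top {f : Module.End R M} {v : M} {s : Set M}
    (hs : Submodule.span R s = ⊤) (h : ∀ x ∈ s, ∃ p : R[X], aeval f p v = x) :
    IsCyclicVector f v := by
  let evalAt : R[X] →ₗ[R] M := LinearMap.applyₗ v ∘ₗ (aeval f).toLinearMap
  have hrange : LinearMap.range evalAt = ⊤ :=
    top_le_iff.mp (hs ▸ Submodule.span_le.mpr fun x hx => h x hx)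
  exact LinearMap.range_eq_top.mp hrange

namespace IsCyclicVector

variable {f : Module.End R M} {v : M}

theorem ext (hv : IsCyclicVector f v) {S T : Module.End R M}
    (hS : Commute S f) (hT : Commute T f) (h : S v = T v) : S = T := by
  ext x
  obtain ⟨p, rfl⟩ := hv x
  have hSp : Commute S (aeval f p) :=
    commute_of_mem_adjoin_singleton_of_commute (aeval_mem_adjoin_singleton R f) hS
  have hTp : Commute T (aeval f p) :=
    commute_of_mem_adjoin_singleton_of_commute (aeval_mem_adjoin_singleton R f) hT
  rw [← Module.End.mul_apply, hSp.eq, Module.End.mul_apply, h, ← Module.End.mul_apply,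
    ← hTp.eq, Module.End.mul_apply]

theorem exists_aeval_eq_of_mem_centralizer (hv : IsCyclicVector f v) {T : Module.End R M}
    (hT : T ∈ Subalgebra.centralizer R {f}) : ∃ p : R[X], aeval f p = T := by
  obtain ⟨p, hp⟩ := hv (T v)
  refine ⟨p, hv.ext (commute_of_mem_adjoin_self (aeval_mem_adjoin_singleton R f)).symm ?_ hp⟩
  exact (mem_centralizer_singleton_iff.mp hT).symm

theorem centralizer_eq_adjoin (hv : IsCyclicVector f v) :
    Subalgebra.centralizer R {f} = Algebra.adjoin R {f} := by
  refine le_antisymm (fun T hT => ?_) (Algebra.adjoin_le ?_)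
  · obtain ⟨p, rfl⟩ := hv.exists_aeval_eq_of_mem_centralizer hT
    exact aeval_mem_adjoin_singleton R f
  · exact Set.singleton_subset_iff.mpr (mem_centralizer_singleton_iff.mpr (Commute.refl f))

theorem commute_of_mem_centralizer (hv : IsCyclicVector f v) {S T : Module.End R M}
    (hS : S ∈ Subalgebra.centralizer R {f}) (hT : T ∈ Subalgebra.centralizer R {f}) :
    Commute S T := by
  rw [hv.centralizer_eq_adjoin] at hS hT
  exact commute_of_mem_adjoin_singleton_of_commute hT (commute_of_mem_adjoin_self hS).symm

noncomputable def centralizerEquiv (hv : IsCyclicVector f v) :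
    Subalgebra.centralizer R {f} ≃ₗ[R] M :=
  LinearEquiv.ofBijective
    (LinearMap.applyₗ v ∘ₗ (Subalgebra.centralizer R {f}).val.toLinearMap) <| by
    refine ⟨fun S T h => Subtype.ext <| hv.ext ?_ ?_ h, fun x => ?_⟩
    · exact (mem_centralizer_singleton_iff.mp S.2).symm
    · exact (mem_centralizer_singleton_iff.mp T.2).symm
    · obtain ⟨p, rfl⟩ := hv x
      have hp : aeval f p ∈ Subalgebra.centralizer R {f} :=
        hv.centralizer_eq_adjoin ▸ aeval_mem_adjoin_singleton R f
      exact ⟨⟨aeval f p, hp⟩, rfl⟩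

theorem finrank_centralizer (hv : IsCyclicVector f v) :
    Module.finrank R (Subalgebra.centralizer R {f}) = Module.finrank R M :=
  hv.centralizerEquiv.finrank_eq

end IsCyclicVector

end Module.End

theorem coe_Dop_pow_apply (n k : ℕ) (x : Pn n) :
    (((Dop n ^ k) x : Pn n) : ℂ[X]) = derivative^[k] (x : ℂ[X]) := by
  rw [Dop, Module.End.pow_restrict, LinearMap.coe_restrict_apply, Module.End.pow_apply]

noncomputable def basisPn (n : ℕ) : Module.Basis (Fin (n + 1)) ℂ (Pn n) :=
  degreeLT.basis ℂ (n + 1)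

theorem coe_basisPn (n : ℕ) (i : Fin (n + 1)) : (basisPn n i : ℂ[X]) = X ^ (i : ℕ) :=
  degreeLT.basis_val i

theorem finrank_Pn (n : ℕ) : Module.finrank ℂ (Pn n) = n + 1 := by
  rw [Module.finrank_eq_card_basis (basisPn n), Fintype.card_fin]

theorem isCyclicVector_Dop (n : ℕ) :
    (Dop n).IsCyclicVector (basisPn n (Fin.last n)) := by
  refine Module.End.isCyclicVector_of_span_eq_top (basisPn n).span_eq ?_
  rintro _ ⟨i, rfl⟩
  have hi : (i : ℕ) ≤ n := Fin.is_le i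
  have hdesc : (Nat.descFactorial n (n - i) : ℂ) ≠ 0 :=
    Nat.cast_ne_zero.mpr (Nat.descFactorial_eq_zero_iff_lt.not.mpr (by omega))
  refine ⟨(Nat.descFactorial n (n - i) : ℂ)⁻¹ • X ^ (n - i), Subtype.ext ?_⟩
  rw [map_smul, aeval_X_pow, LinearMap.smul_apply, Submodule.coe_smul, coe_Dop_pow_apply,
    coe_basisPn, coe_basisPn, Fin.val_last, iterate_derivative_X_pow_eq_smul,
    Nat.sub_sub_self hi, smul_smul, inv_mul_cancel₀ hdesc, one_smul]

theorem centralizer_of_D_commutative_maximal_dim_general (n : ℕ) :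
    (∀ S ∈ Cent n, ∀ T ∈ Cent n, S * T = T * S) ∧
    Module.finrank ℂ (Cent n) = n + 1 ∧
    (∀ B : Subalgebra ℂ (Module.End ℂ (Pn n)),
      (∀ S ∈ B, ∀ T ∈ B, S * T = T * S) → Cent n ≤ B → B = Cent n) := by
  have hcyclic := isCyclicVector_Dop n
  refine ⟨fun S hS T hT => (hcyclic.commute_of_mem_centralizer hS hT).eq, ?_,
    fun B hB hle => Subalgebra.eq_centralizer_singleton_of_mul_comm hB hle⟩
  rw [Cent, hcyclic.finrank_centralizer, finrank_Pn]

/-- The set of operators on `P_n` commuting with `D` is a commutative subalgebra of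
`L(P_n)` of dimension `n + 1`, and it is a maximal commutative subalgebra. -/
theorem centralizer_of_D_commutative_maximal_dim (n : ℕ) (hn : 0 < n) :
    (∀ S ∈ Cent n, ∀ T ∈ Cent n, S * T = T * S) ∧
    Module.finrank ℂ (Cent n) = n + 1 ∧
    (∀ B : Subalgebra ℂ (Module.End ℂ (Pn n)),
      (∀ S ∈ B, ∀ T ∈ B, S * T = T * S) → Cent n ≤ B → B = Cent n) :=
  centralizer_of_D_commutative_maximal_dim_general n
end

section
/- Let f and g be polynomials of the same positive degree, and let Ω be a circular domain containing all roots of g. Then every root of f * g lies in Z(f) + Ω, i.e., for each root w of f*g there is a root u of f and a point v ∈ Ω with w = u + v. -/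
open Polynomial

/-- The `*`-product of two polynomials of the same degree `m`:
`(f * g)(z) := Σ_{k=0}^{m} g^{(k)}(0) f^{(m-k)}(z)`. -/
noncomputable def starAst (m : ℕ) (f g : Polynomial ℂ) : Polynomial ℂ :=
  ∑ k ∈ Finset.range (m + 1),
    Polynomial.C ((Polynomial.derivative^[k] g).eval 0) * (Polynomial.derivative^[m - k] f)

/-- The reflection operator `(Rf)(z) = f(-z)`. -/
noncomputable def reflOp (f : Polynomial ℂ) : Polynomial ℂ := f.comp (-Polynomial.X)

/-- A circular domain: a closed disk, the closed exterior of an open disk, or a closed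
half-plane. -/
def IsCircularDomain (Ω : Set ℂ) : Prop :=
  (∃ c : ℂ, ∃ r : ℝ, Ω = Metric.closedBall c r) ∨
  (∃ c : ℂ, ∃ r : ℝ, Ω = (Metric.ball c r)ᶜ) ∨
  (∃ u : ℂ, u ≠ 0 ∧ ∃ c : ℝ, Ω = {z : ℂ | (u * z).re ≤ c})

/-!
Evaluating `f * g` at `w` gives the apolarity form of `p(z) = f(w - z)` and `g`, so it suffices to
prove Grace's theorem: if `p` and `q` of degree `m` are apolar and a circular domain `Ω` contains
the roots of `q`, then `Ω` contains a root `v` of `p`, and then `w - v` is a root of `f`.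

For a disk this goes by induction on `m`. Splitting off a root `v` of `q`, the polar derivative
`D_v p = m p + (v - z) p'` is apolar to `q / (z - v)`, so it has a root in the disk. If `p` had no
root there, this would contradict Laguerre's theorem: the roots of `D_v p` lie in every circular
domain that contains the roots of `p` but not `v`. Apolarity is invariant under translation and,
up to sign, under reversal `z ↦ 1 / z`; for any `ζ ∉ Ω`, the map `z ↦ 1 / (z - ζ)` sends the
exterior of a disk or a half-plane onto a disk.
-/

open Finset

namespace Polynomial

theorem eval_ne_zero_of_natDegree_eq_zero {R : Type*} [Semiring R] {p : R[X]} (hp : p ≠ 0)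
    (hp0 : p.natDegree = 0) (x : R) : p.eval x ≠ 0 := by
  rw [eq_C_of_natDegree_eq_zero hp0] at hp ⊢
  simpa using hp

variable {R : Type*} [CommRing R]

theorem derivative_taylor (r : R) (p : R[X]) :
    derivative (taylor r p) = taylor r (derivative p) := by
  simp [taylor_apply, derivative_comp]

theorem iterate_derivative_taylor (r : R) (p : R[X]) (k : ℕ) :
    derivative^[k] (taylor r p) = taylor r (derivative^[k] p) := by
  induction k with
  | zero => rfl
  | succ k ih => rw [Function.iterate_succ_apply', ih, derivative_taylor,
      Function.iterate_succ_apply']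

theorem iterate_derivative_comp_C_sub_X (w : R) (p : R[X]) (k : ℕ) :
    derivative^[k] (p.comp (C w - X)) = C ((-1) ^ k) * (derivative^[k] p).comp (C w - X) := by
  induction k generalizing p with
  | zero => simp
  | succ k ih => simp [ih (derivative p), derivative_comp, pow_succ]

theorem eval_zero_iterate_derivative (p : R[X]) (k : ℕ) :
    (derivative^[k] p).eval 0 = k.factorial * p.coeff k := by
  rw [← coeff_zero_eq_eval_zero, coeff_iterate_derivative, zero_add, Nat.descFactorial_self,
    nsmul_eq_mul]

theorem coeff_X_mul_derivative (p : R[X]) (k : ℕ) :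
    (X * derivative p).coeff k = k * p.coeff k := by
  cases k with
  | zero => simp
  | succ k => rw [coeff_X_mul, coeff_derivative, mul_comm]; push_cast; ring

end Polynomial

section Apolarity

variable {R : Type*} [CommRing R]

/-- `p` and `q` are apolar (of order `m`) when `apolarForm m p q = 0`: in coefficients,
`apolarForm m p q = m! * Σ (-1)^k a_k b_{m-k} / (m choose k)`. -/
noncomputable def apolarForm (m : ℕ) (p q : R[X]) : R :=
  ∑ k ∈ range (m + 1), (-1) ^ k * (derivative^[k] p).eval 0 * (derivative^[m - k] q).eval 0

noncomputable def apolarPoly (m : ℕ) (p q : R[X]) : R[X] :=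
  ∑ k ∈ range (m + 1), C ((-1) ^ k) * (derivative^[k] p * derivative^[m - k] q)

theorem apolarForm_zero (p q : R[X]) : apolarForm 0 p q = p.eval 0 * q.eval 0 := by
  simp [apolarForm]

theorem apolarForm_eq_sum_coeff (m : ℕ) (p q : R[X]) :
    apolarForm m p q = ∑ k ∈ range (m + 1),
      (-1) ^ k * (k.factorial * (m - k).factorial : ℕ) * p.coeff k * q.coeff (m - k) := by
  refine sum_congr rfl fun k _ => ?_
  rw [eval_zero_iterate_derivative, eval_zero_iterate_derivative]
  push_cast
  ring

theorem eval_apolarPoly (m : ℕ) (p q : R[X]) (t : R) :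
    (apolarPoly m p q).eval t = apolarForm m (taylor t p) (taylor t q) := by
  simp only [apolarPoly, apolarForm, eval_finsetSum, eval_mul, eval_C,
    iterate_derivative_taylor, taylor_eval, zero_add, mul_assoc]

theorem derivative_apolarPoly {m : ℕ} {p q : R[X]} (hp : p.natDegree ≤ m) (hq : q.natDegree ≤ m) :
    derivative (apolarPoly m p q) = 0 := by
  set F : ℕ → R[X] := fun k => C ((-1) ^ k) * (derivative^[k] p * derivative^[m + 1 - k] q)
  have htelescope : ∀ k ∈ range (m + 1),
      derivative (C ((-1) ^ k) * (derivative^[k] p * derivative^[m - k] q)) = F k - F (k + 1) := by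
    intro k hk
    have hkm : m + 1 - k = m - k + 1 := by have := mem_range.mp hk; omega
    simp only [F, hkm, Nat.add_sub_add_right]
    rw [derivative_C_mul, derivative_mul, ← Function.iterate_succ_apply' derivative,
      ← Function.iterate_succ_apply' derivative, pow_succ, map_mul, map_neg, map_one]
    ring
  rw [apolarPoly, derivative_sum, sum_congr rfl htelescope, sum_range_sub']
  simp [F, iterate_derivative_eq_zero (Nat.lt_succ_of_le hp),
    iterate_derivative_eq_zero (Nat.lt_succ_of_le hq)]

theorem apolarForm_taylor [IsAddTorsionFree R] {m : ℕ} {p q : R[X]} (hp : p.natDegree ≤ m)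
    (hq : q.natDegree ≤ m) (t : R) :
    apolarForm m (taylor t p) (taylor t q) = apolarForm m p q := by
  have hconst := eq_C_of_derivative_eq_zero (derivative_apolarPoly hp hq)
  calc apolarForm m (taylor t p) (taylor t q) = (apolarPoly m p q).eval t :=
        (eval_apolarPoly m p q t).symm
    _ = (apolarPoly m p q).eval 0 := by rw [hconst, eval_C, eval_C]
    _ = apolarForm m p q := by rw [eval_apolarPoly, taylor_zero, taylor_zero]

theorem apolarForm_reflect (m : ℕ) (p q : R[X]) :
    apolarForm m (reflect m p) (reflect m q) = (-1) ^ m * apolarForm m p q := by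
  rw [apolarForm_eq_sum_coeff, apolarForm_eq_sum_coeff, mul_sum, ← sum_range_reflect]
  refine sum_congr rfl fun k hk => ?_
  have hkm : k ≤ m := Nat.lt_succ_iff.mp (mem_range.mp hk)
  have hsign : (-1 : R) ^ m = (-1) ^ (m - k) * (-1) ^ k := by rw [← pow_add, Nat.sub_add_cancel hkm]
  have hsq : (-1 : R) ^ k * (-1) ^ k = 1 := by rw [← mul_pow]; simp
  simp only [Nat.add_sub_cancel, coeff_reflect, revAt_le (Nat.sub_le m k), revAt_le hkm,
    Nat.sub_sub_self hkm, hsign]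
  push_cast
  linear_combination (-(-1 : R) ^ (m - k) * (k.factorial : R) * ((m - k).factorial : R) *
    p.coeff k * q.coeff (m - k)) * hsq

theorem eval_starAst (m : ℕ) (f g : ℂ[X]) (w : ℂ) :
    (starAst m f g).eval w = apolarForm m (f.comp (C w - X)) g := by
  rw [starAst, eval_finsetSum, apolarForm, ← sum_range_reflect]
  refine sum_congr rfl fun k hk => ?_
  have hkm : k ≤ m := Nat.lt_succ_iff.mp (mem_range.mp hk)
  have hsq : (-1 : ℂ) ^ k * (-1) ^ k = 1 := by rw [← mul_pow]; simp
  simp only [Nat.add_sub_cancel, Nat.sub_sub_self hkm, iterate_derivative_comp_C_sub_X, eval_mul,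
    eval_C, eval_comp, eval_sub, eval_X, sub_zero]
  linear_combination (-(derivative^[m - k] g).eval 0 * (derivative^[k] f).eval w) * hsq

end Apolarity

section PolarDerivative

variable {R : Type*} [CommRing R]

noncomputable def polarDeriv (m : ℕ) (v : R) (p : R[X]) : R[X] :=
  C (m : R) * p + (C v - X) * derivative p

theorem eval_polarDeriv_self (m : ℕ) (v : R) (p : R[X]) :
    (polarDeriv m v p).eval v = m * p.eval v := by
  simp [polarDeriv]

theorem coeff_polarDeriv_zero (m : ℕ) (p : R[X]) (k : ℕ) :
    (polarDeriv m 0 p).coeff k = ((m : R) - k) * p.coeff k := by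
  rw [polarDeriv, C_0, zero_sub, neg_mul, coeff_add, coeff_neg, coeff_C_mul,
    coeff_X_mul_derivative]
  ring

theorem taylor_polarDeriv (m : ℕ) (v : R) (p : R[X]) :
    taylor v (polarDeriv m v p) = polarDeriv m 0 (taylor v p) := by
  simp only [polarDeriv, map_add, taylor_mul, taylor_C, map_sub, taylor_X, derivative_taylor,
    C_0]
  ring

theorem natDegree_polarDeriv_le {n : ℕ} {p : R[X]} (hp : p.natDegree ≤ n + 1) (v : R) :
    (polarDeriv (n + 1) v p).natDegree ≤ n := by
  rw [← natDegree_taylor _ v, taylor_polarDeriv, natDegree_le_iff_coeff_eq_zero]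
  intro k hk
  rw [coeff_polarDeriv_zero]
  rcases (Nat.succ_le_of_lt hk).eq_or_lt with rfl | hlt
  · simp
  · rw [coeff_eq_zero_of_natDegree_lt ((natDegree_taylor p v).trans_lt (hp.trans_lt hlt)),
      mul_zero]

theorem apolarForm_polarDeriv_zero (n : ℕ) (p q : R[X]) :
    apolarForm n (polarDeriv (n + 1) 0 p) q = apolarForm (n + 1) p (X * q) := by
  rw [apolarForm_eq_sum_coeff, apolarForm_eq_sum_coeff, sum_range_succ _ (n + 1), Nat.sub_self,
    coeff_X_mul_zero, mul_zero, add_zero]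
  refine sum_congr rfl fun k hk => ?_
  have hkn : k ≤ n := Nat.lt_succ_iff.mp (mem_range.mp hk)
  rw [coeff_polarDeriv_zero, show n + 1 - k = n - k + 1 by omega, coeff_X_mul,
    Nat.factorial_succ]
  push_cast [Nat.cast_sub hkn]
  ring

theorem apolarForm_polarDeriv [IsAddTorsionFree R] {n : ℕ} {p q : R[X]}
    (hp : p.natDegree ≤ n + 1) (hq : q.natDegree ≤ n) (v : R) :
    apolarForm n (polarDeriv (n + 1) v p) q = apolarForm (n + 1) p ((X - C v) * q) := by
  have hXq : ((X - C v) * q).natDegree ≤ n + 1 := by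
    have := natDegree_X_sub_C_le (R := R) v
    exact natDegree_mul_le.trans (by omega)
  rw [← apolarForm_taylor (natDegree_polarDeriv_le hp v) hq v, taylor_polarDeriv,
    apolarForm_polarDeriv_zero, ← apolarForm_taylor hp hXq v, taylor_mul, map_sub, taylor_X,
    taylor_C, add_sub_cancel_right]

end PolarDerivative

section Geometry

open Metric ComplexConjugate Topology

theorem Multiset.sum_mem_closedBall_nsmul {E : Type*} [SeminormedAddCommGroup E] {a : E} {ρ : ℝ}
    (h0 : (0 : E) ∈ closedBall a ρ) {s : Multiset E} (hs : ∀ x ∈ s, x ∈ closedBall a ρ) {n : ℕ}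
    (hn : Multiset.card s ≤ n) : s.sum ∈ closedBall (n • a) (n * ρ) := by
  induction s using Multiset.induction generalizing n with
  | empty =>
    have : ‖a‖ ≤ ρ := by simpa [dist_comm] using h0
    simpa using
      (norm_nsmul_le (n := n) (a := a)).trans (mul_le_mul_of_nonneg_left this n.cast_nonneg)
  | cons x s ih =>
    obtain ⟨n, rfl⟩ : ∃ k, n = k + 1 := ⟨n - 1, by simp at hn; omega⟩
    have hx := hs x (Multiset.mem_cons_self x s)
    have hrest := ih (fun y hy => hs y (Multiset.mem_cons_of_mem hy))
      (by simpa using hn)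
    rw [mem_closedBall] at hx hrest ⊢
    rw [Multiset.sum_cons, succ_nsmul', Nat.cast_succ]
    linarith [dist_add_add_le x s.sum a (n • a)]

theorem Finset.exists_gt_forall_le_of_forall_lt {ι : Type*} (s : Finset ι) (f : ι → ℝ) {r : ℝ}
    (h : ∀ i ∈ s, r < f i) : ∃ r' > r, ∀ i ∈ s, r' ≤ f i := by
  have : ∀ᶠ r' in 𝓝[>] r, ∀ i ∈ s, r' ≤ f i :=
    (Filter.eventually_all_finset s).2 fun i hi =>
      nhdsWithin_le_nhds (eventually_le_nhds (h i hi))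
  obtain ⟨r', hr', hgt⟩ := (this.and self_mem_nhdsWithin).exists
  exact ⟨r', hgt, hr'⟩

/-- Inversion maps the closed exterior of a disk of radius `r` around `b`, where `‖b‖ < r`, onto a
closed disk. -/
theorem Complex.inv_mem_closedBall_iff_le_norm_sub {b : ℂ} {r : ℝ} (hb : ‖b‖ < r) {s : ℂ}
    (hs : s ≠ 0) :
    s⁻¹ ∈ closedBall (-(conj b / (r ^ 2 - ‖b‖ ^ 2 : ℝ))) (r / (r ^ 2 - ‖b‖ ^ 2)) ↔
      r ≤ ‖s - b‖ := by
  set B : ℝ := r ^ 2 - ‖b‖ ^ 2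
  have hr : 0 < r := (norm_nonneg b).trans_lt hb
  have hB : 0 < B := by nlinarith [norm_nonneg b]
  have hBC : (B : ℂ) ≠ 0 := Complex.ofReal_ne_zero.2 hB.ne'
  have hdist : dist s⁻¹ (-(conj b / (B : ℂ))) = ‖(B : ℂ) + s * conj b‖ / (‖s‖ * B) := by
    rw [dist_eq_norm, sub_neg_eq_add,
      show s⁻¹ + conj b / (B : ℂ) = ((B : ℂ) + s * conj b) / (s * B) by field_simp,
      norm_div, norm_mul, Complex.norm_real, Real.norm_of_nonneg hB.le]
  have key : (r * ‖s‖) ^ 2 - ‖(B : ℂ) + s * conj b‖ ^ 2 = B * (‖s - b‖ ^ 2 - r ^ 2) := by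
    simp only [B, mul_pow, Complex.sq_norm, Complex.normSq_apply, Complex.add_re,
      Complex.add_im, Complex.mul_re, Complex.mul_im, Complex.sub_re, Complex.sub_im,
      Complex.ofReal_re, Complex.ofReal_im, Complex.conj_re, Complex.conj_im]
    ring
  rw [mem_closedBall, hdist, div_le_div_iff₀ (by positivity) hB, ← mul_assoc,
    mul_le_mul_iff_of_pos_right hB, ← sq_le_sq₀ (norm_nonneg _) (by positivity),
    ← sq_le_sq₀ hr.le (norm_nonneg _)]
  constructor <;> intro h <;> nlinarith

theorem Complex.inv_mem_closedBall_iff_re_mul_le {u s : ℂ} (hs : s ≠ 0) :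
    s⁻¹ ∈ closedBall (-(u / 2)) (‖u‖ / 2) ↔ (u * s).re ≤ -1 := by
  have hdist : dist s⁻¹ (-(u / 2)) = ‖2 + u * s‖ / (‖s‖ * 2) := by
    rw [dist_eq_norm, sub_neg_eq_add,
      show s⁻¹ + u / 2 = (2 + u * s) / (s * 2) by field_simp, norm_div, norm_mul,
      Complex.norm_two]
  have key : ‖u * s‖ ^ 2 - ‖2 + u * s‖ ^ 2 = -4 * (1 + (u * s).re) := by
    simp only [Complex.sq_norm, Complex.normSq_apply, Complex.add_re, Complex.add_im,
      Complex.re_ofNat, Complex.im_ofNat]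
    ring
  rw [mem_closedBall, hdist, div_le_div_iff₀ (by positivity) two_pos, ← mul_assoc,
    mul_le_mul_iff_of_pos_right two_pos, ← norm_mul, ← sq_le_sq₀ (norm_nonneg _) (norm_nonneg _)]
  constructor <;> intro h <;> linarith

end Geometry

section Grace

open Metric ComplexConjugate

/-- Laguerre's theorem, for the exterior of a disk. -/
theorem le_dist_of_isRoot_polarDeriv {m : ℕ} (hm : 0 < m) {p : ℂ[X]} (hp : p ≠ 0)
    (hpm : p.natDegree ≤ m) {c : ℂ} {r : ℝ} (hroots : ∀ z ∈ p.roots, r ≤ dist z c) {v w : ℂ}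
    (hv : dist v c < r) (hw : (polarDeriv m v p).IsRoot w) : r ≤ dist w c := by
  by_contra! hwc
  have hpw : p.eval w ≠ 0 := fun h => hwc.not_ge (hroots w ((mem_roots hp).2 h))
  set S := (p.roots.map fun z => 1 / (w - z)).sum
  -- `m / (w - v) = Σ 1 / (w - z)`, and inversion about `w` puts `0` and all `1 / (w - z)` in a disk
  have hmS : (m : ℂ) = (w - v) * S := by
    have hlog := (IsAlgClosed.splits p).eval_derivative_eq_eval_mul_sum hpw
    have hroot : (m : ℂ) * p.eval w + (v - w) * (derivative p).eval w = 0 := by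
      simpa [polarDeriv] using hw
    rw [hlog] at hroot
    exact sub_eq_zero.1 ((mul_eq_zero.1 (by linear_combination hroot)).resolve_left hpw)
  have hwv : w - v ≠ 0 := by
    rintro h
    rw [h, zero_mul, Nat.cast_eq_zero] at hmS
    omega
  set b := w - c
  have hb : ‖b‖ < r := by rwa [← dist_eq_norm]
  set B : ℝ := r ^ 2 - ‖b‖ ^ 2
  set γ : ℂ := -(conj b / (B : ℂ))
  have hB : 0 < B := by nlinarith [norm_nonneg b, (norm_nonneg b).trans_lt hb]
  have hγ : (0 : ℂ) ∈ closedBall γ (r / B) := by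
    rw [mem_closedBall, dist_zero_left, norm_neg, norm_div, Complex.norm_conj, Complex.norm_real,
      Real.norm_of_nonneg hB.le]
    exact div_le_div_of_nonneg_right hb.le hB.le
  have hmem : ∀ x ∈ p.roots.map fun z => 1 / (w - z), x ∈ closedBall γ (r / B) := by
    simp only [Multiset.mem_map]
    rintro _ ⟨z, hz, rfl⟩
    have hwz : w - z ≠ 0 := sub_ne_zero.2 fun h => hpw (h ▸ (mem_roots hp).1 hz)
    rw [one_div, Complex.inv_mem_closedBall_iff_le_norm_sub hb hwz,
      show w - z - b = c - z by ring, ← dist_eq_norm, dist_comm]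
    exact hroots z hz
  have hS : S ∈ closedBall (m • γ) (m * (r / B)) := Multiset.sum_mem_closedBall_nsmul hγ hmem
    ((Multiset.card_map _ _).trans_le ((card_roots' p).trans hpm))
  have hinv : (w - v)⁻¹ ∈ closedBall γ (r / B) := by
    rw [mem_closedBall, nsmul_eq_mul, show S = m * (w - v)⁻¹ by rw [hmS]; field_simp,
      dist_eq_norm, ← mul_sub, norm_mul, Complex.norm_natCast, ← dist_eq_norm] at hS
    exact (mul_le_mul_iff_of_pos_left (show (0 : ℝ) < m by exact_mod_cast hm)).1 hS
  rw [Complex.inv_mem_closedBall_iff_le_norm_sub hb hwv, show w - v - b = c - v by ring,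
    ← dist_eq_norm, dist_comm] at hinv
  exact hinv.not_gt hv

/-- Grace's theorem for closed disks. -/
theorem exists_isRoot_mem_closedBall_of_apolarForm_eq_zero {m : ℕ} {p q : ℂ[X]} (hp : p ≠ 0)
    (hpm : p.natDegree ≤ m) (hq : q.degree = m) (hpq : apolarForm m p q = 0) {c : ℂ} {r : ℝ}
    (hroots : ∀ z ∈ q.roots, z ∈ closedBall c r) : ∃ v ∈ closedBall c r, p.IsRoot v := by
  have hq0 : q ≠ 0 := by rintro rfl; simp at hq
  induction m generalizing p q with
  | zero =>
    rw [apolarForm_zero] at hpq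
    exact absurd hpq (mul_ne_zero (eval_ne_zero_of_natDegree_eq_zero hp (by omega) 0)
      (eval_ne_zero_of_natDegree_eq_zero hq0 (natDegree_eq_of_degree_eq_some hq) 0))
  | succ n ih =>
    by_contra! hnone
    obtain ⟨v, hv⟩ := IsAlgClosed.exists_root q (by rw [hq]; exact_mod_cast n.succ_ne_zero)
    have hvc : v ∈ closedBall c r := hroots v ((mem_roots hq0).2 hv)
    set q₁ := q /ₘ (X - C v)
    have hfactor : (X - C v) * q₁ = q := mul_divByMonic_eq_iff_isRoot.2 hv
    have hq₁0 : q₁ ≠ 0 := by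
      rintro h
      rw [h, mul_zero] at hfactor
      exact hq0 hfactor.symm
    have hq₁ : q₁.degree = n := by
      rw [degree_eq_natDegree hq₁0, natDegree_divByMonic q (monic_X_sub_C v), natDegree_X_sub_C,
        natDegree_eq_of_degree_eq_some hq, Nat.add_sub_cancel]
    have hp₁0 : polarDeriv (n + 1) v p ≠ 0 := fun h => by
      have := eval_polarDeriv_self (n + 1) v p
      rw [h, eval_zero, eq_comm, mul_eq_zero] at this
      exact hnone v hvc (this.resolve_left (Nat.cast_ne_zero.2 n.succ_ne_zero))
    have hp₁q₁ : apolarForm n (polarDeriv (n + 1) v p) q₁ = 0 := by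
      rw [apolarForm_polarDeriv hpm (natDegree_eq_of_degree_eq_some hq₁).le, hfactor, hpq]
    have hq₁roots : ∀ z ∈ q₁.roots, z ∈ closedBall c r := fun z hz =>
      hroots z (Multiset.mem_of_le (roots.le_of_dvd hq0 (Dvd.intro_left _ hfactor)) hz)
    obtain ⟨v', hv'c, hv'⟩ :=
      ih hp₁0 (natDegree_polarDeriv_le hpm v) hq₁ hp₁q₁ hq₁roots hq₁0
    obtain ⟨r', hrr', hr'⟩ := p.roots.toFinset.exists_gt_forall_le_of_forall_lt (dist · c)
      fun z hz => not_le.1 fun h => hnone z h ((mem_roots hp).1 (Multiset.mem_toFinset.1 hz))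
    have := le_dist_of_isRoot_polarDeriv n.succ_pos hp hpm
      (fun z hz => hr' z (Multiset.mem_toFinset.2 hz)) ((mem_closedBall.1 hvc).trans_lt hrr') hv'
    exact (mem_closedBall.1 hv'c).not_gt (hrr'.trans_le this)

end Grace

section MobiusReduction

variable {K : Type*} [Field K]

theorem Polynomial.isRoot_reflect_taylor_iff {m : ℕ} {h : K[X]} (hh : h.natDegree ≤ m) (ζ : K)
    {x : K} (hx : x ≠ 0) : (reflect m (taylor ζ h)).IsRoot x ↔ h.IsRoot (ζ + x⁻¹) := by
  have : Invertible x⁻¹ := invertibleOfNonzero (inv_ne_zero hx)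
  have := eval₂_reflect_eq_zero_iff (RingHom.id K) x⁻¹ m (taylor ζ h)
    (by rwa [natDegree_taylor])
  rw [invOf_eq_inv, inv_inv] at this
  rw [IsRoot.def, IsRoot.def, eval, this, ← eval, taylor_eval, add_comm]

theorem Polynomial.coeff_reflect_taylor_self (m : ℕ) (h : K[X]) (ζ : K) :
    (reflect m (taylor ζ h)).coeff m = h.eval ζ := by
  rw [coeff_reflect, revAt_le le_rfl, Nat.sub_self, taylor_coeff_zero]

theorem Polynomial.eval_zero_reflect_taylor {m : ℕ} {h : K[X]} (hh : h.natDegree = m) (ζ : K) :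
    (reflect m (taylor ζ h)).eval 0 = h.leadingCoeff := by
  rw [← coeff_zero_eq_eval_zero, coeff_reflect, revAt_le (Nat.zero_le m), Nat.sub_zero, ← hh,
    coeff_taylor_natDegree]

end MobiusReduction

section CircularDomains

open Metric

theorem exists_isRoot_mem_of_inv_sub_mem_closedBall {m : ℕ} {p q : ℂ[X]} (hp : p.degree = m)
    (hq : q.degree = m) (hpq : apolarForm m p q = 0) {Ω : Set ℂ} (hroots : ∀ z ∈ q.roots, z ∈ Ω)
    {ζ γ : ℂ} {ρ : ℝ} (hζ : q.eval ζ ≠ 0)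
    (hΩ : ∀ s ≠ 0, ζ + s ∈ Ω ↔ s⁻¹ ∈ closedBall γ ρ) : ∃ v ∈ Ω, p.IsRoot v := by
  have hpm := natDegree_eq_of_degree_eq_some hp
  have hqm := natDegree_eq_of_degree_eq_some hq
  have hq0 : q ≠ 0 := by rintro rfl; simp at hq
  have hp0 : p ≠ 0 := by rintro rfl; simp at hp
  set P := reflect m (taylor ζ p)
  set Q := reflect m (taylor ζ q)
  have hP0 : P.eval 0 ≠ 0 := by
    rw [eval_zero_reflect_taylor hpm]
    exact leadingCoeff_ne_zero.2 hp0
  have hQ0 : Q.eval 0 ≠ 0 := by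
    rw [eval_zero_reflect_taylor hqm]
    exact leadingCoeff_ne_zero.2 hq0
  have hQ : Q.degree = m := by
    refine degree_eq_of_le_of_coeff_ne_zero ?_ (by rwa [coeff_reflect_taylor_self])
    exact natDegree_le_iff_degree_le.1 (natDegree_reflect_le.trans (by simp [hqm]))
  have hPQ : apolarForm m P Q = 0 := by
    rw [apolarForm_reflect, apolarForm_taylor hpm.le hqm.le, hpq, mul_zero]
  have hQroots : ∀ z ∈ Q.roots, z ∈ closedBall γ ρ := by
    intro z hz
    have hz0 : z ≠ 0 := by rintro rfl; exact hQ0 (isRoot_of_mem_roots hz)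
    rw [← inv_inv z, ← hΩ _ (inv_ne_zero hz0)]
    refine hroots _ ((mem_roots hq0).2 ?_)
    exact (isRoot_reflect_taylor_iff hqm.le ζ hz0).1 (isRoot_of_mem_roots hz)
  obtain ⟨x, hxγ, hx⟩ := exists_isRoot_mem_closedBall_of_apolarForm_eq_zero
    (fun h : P = 0 => hP0 (by rw [h, eval_zero])) (natDegree_reflect_le.trans (by simp [hpm]))
    hQ hPQ hQroots
  have hx0 : x ≠ 0 := by rintro rfl; exact hP0 hx
  exact ⟨ζ + x⁻¹, (hΩ _ (inv_ne_zero hx0)).2 (by rwa [inv_inv]),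
    (isRoot_reflect_taylor_iff hpm.le ζ hx0).1 hx⟩

/-- Grace's theorem. -/
theorem exists_isRoot_mem_of_apolarForm_eq_zero {m : ℕ} {p q : ℂ[X]} (hp : p.degree = m)
    (hq : q.degree = m) (hpq : apolarForm m p q = 0) {Ω : Set ℂ} (hΩ : IsCircularDomain Ω)
    (hroots : ∀ z, q.IsRoot z → z ∈ Ω) : ∃ v ∈ Ω, p.IsRoot v := by
  have hp0 : p ≠ 0 := by rintro rfl; simp at hp
  have hpm := (natDegree_eq_of_degree_eq_some hp).le
  have hroots' : ∀ z ∈ q.roots, z ∈ Ω := fun z hz => hroots z (isRoot_of_mem_roots hz)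
  have hζ : ∀ ζ ∉ Ω, q.eval ζ ≠ 0 := fun ζ hζ h => hζ (hroots ζ h)
  rcases hΩ with ⟨c, r, rfl⟩ | ⟨c, r, rfl⟩ | ⟨u, hu, c, rfl⟩
  · exact exists_isRoot_mem_closedBall_of_apolarForm_eq_zero hp0 hpm hq hpq hroots'
  · rcases le_or_gt r 0 with hr | hr
    · obtain ⟨R, hR⟩ := (q.roots.toFinset.finite_toSet.isBounded).subset_closedBall 0
      obtain ⟨v, -, hv⟩ := exists_isRoot_mem_closedBall_of_apolarForm_eq_zero hp0 hpm hq hpq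
        fun z hz => hR (Multiset.mem_toFinset.2 hz)
      exact ⟨v, by simp [ball_eq_empty.2 hr], hv⟩
    · refine exists_isRoot_mem_of_inv_sub_mem_closedBall hp hq hpq hroots'
        (hζ c (by simpa using hr)) (γ := 0) (ρ := r⁻¹) fun s hs => ?_
      rw [Set.mem_compl_iff, mem_ball, not_lt, mem_closedBall, dist_zero_right, norm_inv,
        dist_eq_norm, add_sub_cancel_left, inv_le_inv₀ (norm_pos_iff.2 hs) hr]
  · have hζΩ : (c + 1 : ℂ) / u ∉ {z : ℂ | (u * z).re ≤ c} := by
      rw [Set.mem_ofPred_eq, mul_div_cancel₀ _ hu, not_le]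
      simp
    refine exists_isRoot_mem_of_inv_sub_mem_closedBall hp hq hpq hroots' (hζ _ hζΩ)
      (γ := -(u / 2)) (ρ := ‖u‖ / 2) fun s hs => ?_
    rw [Complex.inv_mem_closedBall_iff_re_mul_le hs, Set.mem_ofPred_eq, mul_add,
      mul_div_cancel₀ _ hu, Complex.add_re, Complex.add_re, Complex.ofReal_re, Complex.one_re]
    constructor <;> intro h <;> linarith

end CircularDomains

theorem roots_ast_subset_roots_add_general (m : ℕ) (f g : Polynomial ℂ)
    (hf : f.degree = (m : ℕ)) (hg : g.degree = (m : ℕ))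
    (Ω : Set ℂ) (hΩ : IsCircularDomain Ω) (hroots : ∀ z, g.IsRoot z → z ∈ Ω) :
    ∀ w, (starAst m f g).IsRoot w → ∃ u v, f.IsRoot u ∧ v ∈ Ω ∧ w = u + v := by
  intro w hw
  have hp : (f.comp (C w - X)).degree = m := by
    have hlin : (C w - X).degree = 1 := by
      rw [← neg_sub, degree_neg, degree_X_sub_C]
    rw [degree_comp (by rw [hlin]; exact zero_lt_one), hlin, hf, mul_one]
  have hpq : apolarForm m (f.comp (C w - X)) g = 0 := (eval_starAst m f g w).symm.trans hw
  obtain ⟨v, hvΩ, hv⟩ := exists_isRoot_mem_of_apolarForm_eq_zero hp hg hpq hΩ hroots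
  exact ⟨w - v, v, by simpa using hv, hvΩ, by ring⟩

/-- Let `f` and `g` be polynomials of the same positive degree `m` and let `Ω` be a
circular domain containing all roots of `g`. Then every root of `f * g` lies in
`Z(f) + Ω`. -/
theorem roots_ast_subset_roots_add (m : ℕ) (hm : 0 < m) (f g : Polynomial ℂ)
    (hf : f.degree = (m : ℕ)) (hg : g.degree = (m : ℕ))
    (Ω : Set ℂ) (hΩ : IsCircularDomain Ω) (hroots : ∀ z, g.IsRoot z → z ∈ Ω) :
    ∀ w, (starAst m f g).IsRoot w → ∃ u v, f.IsRoot u ∧ v ∈ Ω ∧ w = u + v :=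
  roots_ast_subset_roots_add_general m f g hf hg Ω hΩ hroots
end
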